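/- arXiv:1504.01305 — 2 statements merged into one kernel-verified Lean document; each statement's English description precedes it below -/
import Mathlib

section
/- Let a = re^{iθ} ∈ 𝔻 with r = |a|, and set ℓ = 2π(1 − |a|)/(2π|a| + 1). There is an absolute constant C > 0 (independent of a) such that for every z = ρe^{iφ} with 1 < ρ < 1 + ℓ and |φ − θ| ≤ ℓ/2, one has ℓ/(2π) ≤ |1 − conj(a)·z| ≤ C·ℓ; consequently |1 − conj(a)·z|, 1 − |a|, and ℓ are pairwise comparable with absolute constants for all such z. -/
open Complex Set
open scoped Real

noncomputable section

/-!
Write `conj a · z = t e^{iψ}` with `t = rρ` and `ψ = φ - θ`. The choice of `ℓ` is made so that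
`ℓ / 2π = 1 - r(1 + ℓ)`; hence `r ≤ t < 1 - ℓ/2π` on the box, and
`1 - t ≤ |1 - t e^{iψ}| ≤ (1 - t) + |ψ|` squeezes the norm between `ℓ / 2π` and
`(1 - r) + ℓ/2 ≤ 3ℓ`. Finally `1 - r` and `ℓ` are comparable because the denominator
`2πr + 1` lies between `1` and `4π`.
-/

lemma conj_polar_mul_polar (r θ ρ φ : ℝ) :
    (starRingEnd ℂ) ((r : ℂ) * exp ((θ : ℂ) * I)) * ((ρ : ℂ) * exp ((φ : ℂ) * I)) =
      ((r * ρ : ℝ) : ℂ) * exp (((φ - θ : ℝ) : ℂ) * I) := by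
  rw [map_mul, ← exp_conj, conj_ofReal, map_mul, conj_ofReal, conj_I, mul_mul_mul_comm,
    ← exp_add]
  push_cast
  ring_nf

lemma one_sub_le_norm_one_sub_ofReal_mul_exp {t : ℝ} (ht : 0 ≤ t) (ψ : ℝ) :
    1 - t ≤ ‖1 - (t : ℂ) * exp ((ψ : ℂ) * I)‖ := by
  simpa [norm_exp_ofReal_mul_I, abs_of_nonneg ht] using
    norm_sub_norm_le (1 : ℂ) ((t : ℂ) * exp ((ψ : ℂ) * I))

lemma norm_one_sub_ofReal_mul_exp_le {t : ℝ} (ht : t ≤ 1) (ψ : ℝ) :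
    ‖1 - (t : ℂ) * exp ((ψ : ℂ) * I)‖ ≤ (1 - t) + |ψ| := by
  have hchord : ‖1 - exp ((ψ : ℂ) * I)‖ ≤ |ψ| := by
    rw [norm_sub_rev, mul_comm]
    exact Real.norm_exp_I_mul_ofReal_sub_one_le
  calc ‖1 - (t : ℂ) * exp ((ψ : ℂ) * I)‖
      = ‖((1 - t : ℝ) : ℂ) * exp ((ψ : ℂ) * I) + (1 - exp ((ψ : ℂ) * I))‖ := by
        push_cast; ring_nf
    _ ≤ (1 - t) + |ψ| := by
        grw [norm_add_le, norm_mul, norm_exp_ofReal_mul_I, norm_real, Real.norm_of_nonneg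
          (by linarith), hchord, mul_one]

def arcLength (r : ℝ) : ℝ := 2 * π * (1 - r) / (2 * π * r + 1)

section arcLength

variable {r : ℝ}

lemma arcLength_pos (hr₀ : 0 ≤ r) (hr₁ : r < 1) : 0 < arcLength r := by
  unfold arcLength
  have := Real.pi_pos
  apply div_pos <;> nlinarith

lemma arcLength_div_two_pi (hr₀ : 0 ≤ r) : arcLength r / (2 * π) = 1 - r * (1 + arcLength r) := by
  unfold arcLength
  have := Real.pi_pos
  field_simp
  ring

lemma arcLength_le (hr₀ : 0 ≤ r) (hr₁ : r ≤ 1) : arcLength r ≤ 2 * π * (1 - r) := by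
  unfold arcLength
  have := Real.pi_pos
  rw [div_le_iff₀ (by positivity)]
  nlinarith [mul_nonneg (mul_nonneg this.le (sub_nonneg.2 hr₁)) hr₀]

lemma one_sub_le_two_mul_arcLength (hr₀ : 0 ≤ r) (hr₁ : r ≤ 1) : 1 - r ≤ 2 * arcLength r := by
  unfold arcLength
  have := Real.pi_gt_three
  rw [mul_div_assoc', le_div_iff₀ (by positivity)]
  nlinarith [mul_nonneg (sub_nonneg.2 hr₁) (sub_nonneg.2 hr₁)]

end arcLength

/-- The two-sided estimate `|1 - conj(a)·z| ≈ 1 - |a| ≈ ℓ(I)` for `z` in the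
exterior Carleson box over the arc `I` of length `ℓ = 2π(1-|a|)/(2π|a|+1)`
centred at `e^{iθ}`, with absolute constants. -/
theorem exterior_box_comparability :
    ∃ C : ℝ, 0 < C ∧ ∀ r θ : ℝ, 0 ≤ r → r < 1 →
      ∀ ρ φ : ℝ,
        1 < ρ → ρ < 1 + 2 * π * (1 - r) / (2 * π * r + 1) →
        |φ - θ| ≤ (2 * π * (1 - r) / (2 * π * r + 1)) / 2 →
        (2 * π * (1 - r) / (2 * π * r + 1)) / (2 * π) ≤
            ‖1 - (starRingEnd ℂ) ((r : ℂ) * Complex.exp ((θ : ℂ) * Complex.I)) *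
              ((ρ : ℂ) * Complex.exp ((φ : ℂ) * Complex.I))‖ ∧
        ‖1 - (starRingEnd ℂ) ((r : ℂ) * Complex.exp ((θ : ℂ) * Complex.I)) *
              ((ρ : ℂ) * Complex.exp ((φ : ℂ) * Complex.I))‖ ≤
            C * (2 * π * (1 - r) / (2 * π * r + 1)) ∧
        ‖1 - (starRingEnd ℂ) ((r : ℂ) * Complex.exp ((θ : ℂ) * Complex.I)) *
              ((ρ : ℂ) * Complex.exp ((φ : ℂ) * Complex.I))‖ ≤ C * (1 - r) ∧
        1 - r ≤ C * ‖1 - (starRingEnd ℂ) ((r : ℂ) * Complex.exp ((θ : ℂ) * Complex.I)) *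
              ((ρ : ℂ) * Complex.exp ((φ : ℂ) * Complex.I))‖ ∧
        2 * π * (1 - r) / (2 * π * r + 1) ≤ C * (1 - r) ∧
        1 - r ≤ C * (2 * π * (1 - r) / (2 * π * r + 1)) := by
  refine ⟨6 * π, by positivity, fun r θ hr₀ hr₁ ρ φ hρ₁ hρ₂ hψ => ?_⟩
  rw [show 2 * π * (1 - r) / (2 * π * r + 1) = arcLength r from rfl] at hρ₂ hψ ⊢
  rw [conj_polar_mul_polar]
  set ℓ := arcLength r
  set N := ‖1 - ((r * ρ : ℝ) : ℂ) * exp (((φ - θ : ℝ) : ℂ) * I)‖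
  have hρr : r ≤ r * ρ := by nlinarith
  have hρℓ : r * ρ ≤ 1 - ℓ / (2 * π) := by
    rw [arcLength_div_two_pi hr₀, sub_sub_cancel]
    exact mul_le_mul_of_nonneg_left hρ₂.le hr₀
  have hℓ₀ : 0 < ℓ := arcLength_pos hr₀ hr₁
  have hℓ_le : ℓ ≤ 2 * π * (1 - r) := arcLength_le hr₀ hr₁.le
  have h_le_ℓ : 1 - r ≤ 2 * ℓ := one_sub_le_two_mul_arcLength hr₀ hr₁.le
  have hN_lower : ℓ / (2 * π) ≤ N := by
    linarith [one_sub_le_norm_one_sub_ofReal_mul_exp (by positivity : 0 ≤ r * ρ) (φ - θ)]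
  have hN_upper : N ≤ 3 * ℓ := by
    have : 0 < ℓ / (2 * π) := by positivity
    linarith [norm_one_sub_ofReal_mul_exp_le (by linarith : r * ρ ≤ 1) (φ - θ)]
  have hπ := Real.pi_gt_three
  have hℓN : ℓ ≤ 2 * π * N := by rwa [div_le_iff₀' (by positivity)] at hN_lower
  refine ⟨hN_lower, by nlinarith, by nlinarith, by nlinarith, by nlinarith, by nlinarith⟩
end
end

section
/- Let 0 < h ≤ 2π, θ ∈ ℝ, and set a = ((2π − h)/(2π(h + 1)))·e^{iθ} ∈ 𝔻. Then for every z = ρe^{iφ} with 1 < ρ < 1 + h and |φ − θ| ≤ h/2, one has 0 < |σ_a(z)|² − 1 ≤ 8π(2π + 1)(π + 1). -/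
/-! For `|a| < 1 < |z|` the identity `|a - z|² - |1 - ā z|² = (1 - |a|²)(|z|² - 1)` gives
`|σ_a(z)|² - 1 = (1 - |a|²)(|z|² - 1)/|1 - ā z|² > 0`. With `|a| = r := (2π - h)/(2π(h + 1))`
and `|z| = ρ < 1 + h`, the denominator is at least `(1 - rρ)² ≥ (1 - r(1 + h))² = (h/2π)²`,
while the numerator is at most `2(1 - r) · h(2 + h) ≤ 2h(2π + 1)/(2π) · 2h(π + 1)`. -/

open Complex Set
open scoped Real

noncomputable section

/-- The Möbius transformation `σ_a(z) = (a - z)/(1 - conj a · z)`. -/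
def mobius (a z : ℂ) : ℂ := (a - z) / (1 - (starRingEnd ℂ) a * z)

open ComplexConjugate

theorem norm_sub_sq_sub_norm_one_sub_conj_mul_sq (a z : ℂ) :
    ‖a - z‖ ^ 2 - ‖1 - conj a * z‖ ^ 2 = (1 - ‖a‖ ^ 2) * (‖z‖ ^ 2 - 1) := by
  simp only [Complex.sq_norm, Complex.normSq_apply, Complex.sub_re, Complex.sub_im,
    Complex.mul_re, Complex.mul_im, Complex.conj_re, Complex.conj_im, Complex.one_re,
    Complex.one_im]
  ring

theorem norm_mobius_sq_sub_one {a z : ℂ} (hden : 1 - conj a * z ≠ 0) :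
    ‖mobius a z‖ ^ 2 - 1 = (1 - ‖a‖ ^ 2) * (‖z‖ ^ 2 - 1) / ‖1 - conj a * z‖ ^ 2 := by
  have hpos : ‖1 - conj a * z‖ ^ 2 ≠ 0 := by positivity
  rw [← norm_sub_sq_sub_norm_one_sub_conj_mul_sq, sub_div, div_self hpos, mobius, norm_div,
    div_pow]

theorem one_sub_norm_mul_norm_le_norm_one_sub_conj_mul (a z : ℂ) :
    1 - ‖a‖ * ‖z‖ ≤ ‖1 - conj a * z‖ := by
  simpa using norm_sub_norm_le (1 : ℂ) (conj a * z)

/-- The modulus of the point `a` attached to the arc of length `h`. -/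
def carlesonRadius (h : ℝ) : ℝ := (2 * π - h) / (2 * π * (h + 1))

section CarlesonRadius

variable {h : ℝ}

theorem carlesonRadius_nonneg (hh0 : 0 < h) (hh : h ≤ 2 * π) : 0 ≤ carlesonRadius h :=
  div_nonneg (by linarith) (by positivity)

theorem carlesonRadius_mul_add_one (hh0 : 0 < h) :
    carlesonRadius h * (h + 1) = 1 - h / (2 * π) := by
  rw [carlesonRadius]
  field_simp

theorem carlesonRadius_lt_one (hh0 : 0 < h) : carlesonRadius h < 1 := by
  have hmul := carlesonRadius_mul_add_one hh0
  have : 0 < h / (2 * π) := by positivity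
  nlinarith

theorem one_sub_carlesonRadius_le (hh0 : 0 < h) :
    1 - carlesonRadius h ≤ h * (2 * π + 1) / (2 * π) := by
  have hmul := carlesonRadius_mul_add_one hh0
  have hnonneg : 0 ≤ h * (2 * π + 1) / (2 * π) := by positivity
  have : (1 - carlesonRadius h) * (h + 1) = h * (2 * π + 1) / (2 * π) := by
    field_simp at hmul ⊢
    linarith
  nlinarith [carlesonRadius_lt_one hh0]

theorem div_two_pi_le_one_sub_carlesonRadius_mul {ρ : ℝ} (hh0 : 0 < h) (hh : h ≤ 2 * π)
    (hρ : ρ < 1 + h) : h / (2 * π) ≤ 1 - carlesonRadius h * ρ := by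
  have hmul := carlesonRadius_mul_add_one hh0
  nlinarith [carlesonRadius_nonneg hh0 hh]

theorem one_sub_carlesonRadius_sq_mul_le {ρ : ℝ} (hh0 : 0 < h) (hh : h ≤ 2 * π)
    (hρ1 : 1 < ρ) (hρ2 : ρ < 1 + h) :
    (1 - carlesonRadius h ^ 2) * (ρ ^ 2 - 1) ≤
      8 * π * (2 * π + 1) * (π + 1) * (h / (2 * π)) ^ 2 := by
  have hr0 := carlesonRadius_nonneg hh0 hh
  have hr1 := carlesonRadius_lt_one hh0
  have hnum : 1 - carlesonRadius h ^ 2 ≤ 2 * (h * (2 * π + 1) / (2 * π)) := by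
    nlinarith [one_sub_carlesonRadius_le hh0]
  have hρsq : ρ ^ 2 - 1 ≤ 2 * h * (π + 1) := by nlinarith
  calc (1 - carlesonRadius h ^ 2) * (ρ ^ 2 - 1)
      ≤ 2 * (h * (2 * π + 1) / (2 * π)) * (2 * h * (π + 1)) :=
        mul_le_mul hnum hρsq (by nlinarith) (by positivity)
    _ = 8 * π * (2 * π + 1) * (π + 1) * (h / (2 * π)) ^ 2 := by
        field_simp
        ring

end CarlesonRadius

theorem mobius_exterior_box_bound_general
    (h θ : ℝ) (hh0 : 0 < h) (hh : h ≤ 2 * π)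
    (ρ φ : ℝ) (hρ1 : 1 < ρ) (hρ2 : ρ < 1 + h) :
    0 < ‖mobius ((((2 * π - h) / (2 * π * (h + 1)) : ℝ) : ℂ) *
          Complex.exp ((θ : ℂ) * Complex.I))
        ((ρ : ℂ) * Complex.exp ((φ : ℂ) * Complex.I))‖ ^ 2 - 1 ∧
    ‖mobius ((((2 * π - h) / (2 * π * (h + 1)) : ℝ) : ℂ) *
          Complex.exp ((θ : ℂ) * Complex.I))
        ((ρ : ℂ) * Complex.exp ((φ : ℂ) * Complex.I))‖ ^ 2 - 1 ≤
      8 * π * (2 * π + 1) * (π + 1) := by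
  change 0 < ‖mobius ((carlesonRadius h : ℂ) * _) _‖ ^ 2 - 1 ∧
    ‖mobius ((carlesonRadius h : ℂ) * _) _‖ ^ 2 - 1 ≤ _
  set a : ℂ := (carlesonRadius h : ℂ) * Complex.exp ((θ : ℂ) * Complex.I)
  set z : ℂ := (ρ : ℂ) * Complex.exp ((φ : ℂ) * Complex.I)
  have ha : ‖a‖ = carlesonRadius h := by
    simp [a, Complex.norm_exp_ofReal_mul_I, abs_of_nonneg (carlesonRadius_nonneg hh0 hh)]
  have hz : ‖z‖ = ρ := by
    simp [z, Complex.norm_exp_ofReal_mul_I, abs_of_pos (by linarith : (0 : ℝ) < ρ)]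
  have hden : h / (2 * π) ≤ ‖1 - conj a * z‖ := by
    refine (div_two_pi_le_one_sub_carlesonRadius_mul hh0 hh hρ2).trans ?_
    simpa [ha, hz] using one_sub_norm_mul_norm_le_norm_one_sub_conj_mul a z
  have hdenpos : 0 < ‖1 - conj a * z‖ := lt_of_lt_of_le (by positivity) hden
  rw [norm_mobius_sq_sub_one (norm_pos_iff.mp hdenpos), ha, hz]
  have hr1 := carlesonRadius_lt_one hh0
  have hr0 := carlesonRadius_nonneg hh0 hh
  constructor
  · exact div_pos (mul_pos (by nlinarith) (by nlinarith)) (by positivity)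
  · rw [div_le_iff₀ (by positivity)]
    calc (1 - carlesonRadius h ^ 2) * (ρ ^ 2 - 1)
        ≤ 8 * π * (2 * π + 1) * (π + 1) * (h / (2 * π)) ^ 2 :=
          one_sub_carlesonRadius_sq_mul_le hh0 hh hρ1 hρ2
      _ ≤ 8 * π * (2 * π + 1) * (π + 1) * ‖1 - conj a * z‖ ^ 2 := by
          gcongr

/-- For `a = ((2π − h)/(2π(h + 1)))·e^{iθ}` and `z` in the exterior Carleson box
over the arc of length `h` centred at `e^{iθ}`, one has
`0 < |σ_a(z)|² − 1 ≤ 8π(2π + 1)(π + 1)`. -/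
theorem mobius_exterior_box_bound
    (h θ : ℝ) (hh0 : 0 < h) (hh : h ≤ 2 * π)
    (ρ φ : ℝ) (hρ1 : 1 < ρ) (hρ2 : ρ < 1 + h) (hφ : |φ - θ| ≤ h / 2) :
    0 < ‖mobius ((((2 * π - h) / (2 * π * (h + 1)) : ℝ) : ℂ) *
          Complex.exp ((θ : ℂ) * Complex.I))
        ((ρ : ℂ) * Complex.exp ((φ : ℂ) * Complex.I))‖ ^ 2 - 1 ∧
    ‖mobius ((((2 * π - h) / (2 * π * (h + 1)) : ℝ) : ℂ) *
          Complex.exp ((θ : ℂ) * Complex.I))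
        ((ρ : ℂ) * Complex.exp ((φ : ℂ) * Complex.I))‖ ^ 2 - 1 ≤
      8 * π * (2 * π + 1) * (π + 1) :=
  mobius_exterior_box_bound_general h θ hh0 hh ρ φ hρ1 hρ2

end
end
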